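/- For s ≥ 2, the set of eigenvalues of the s-blowup G^[s] of a graph G depends only on the squares π(i)² of the vertex weights: λ is an eigenvalue of G^[s] if and only if λ is an eigenvalue of A(Ĝ) D_a for some induced subgraph Ĝ of G and some diagonal matrix D_a with diagonal entries a_i that are s-th roots of unity. -/

import Mathlib

/-!
Multiplying the eigen-equation of `G^[s]` at `(i, a)` by `x (i, a)` gives
`λ x(i,a)^(2s) = P i * ∑_{j ∼ i} P j` with `P i = ∏_b x(i,b)`. For `λ ≠ 0` the `2s`-th powers
`t i` of the entries in a block therefore coincide, `a i = P i ^ 2 / t i` is an `s`-th root of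
unity, and `q i = t i / P i` is an eigenvector of `A(Ĝ) D_a` on the support `Ĝ` of `P`, because
`a i * q i = P i`. Conversely, an eigenvector `w` of `A(Ĝ) D_a` lifts to `G^[s]` by taking an
`s`-th root `c i` of `√(a i) * w i` on every entry of block `i` and multiplying one entry by
`√(a i)`: the block products become `a i * w i`, and the `2s`-th powers no longer see `√(a i)`.
The eigenvalue `0` comes from a single vertex, where `A(Ĝ) D_a = 0`.
-/

open Finset Matrix

/-- Eigen-equation for the s-blowup hypergraph `G^[s]` (equation (3) of the paper). -/
def IsBlowupEig {V : Type*} [Fintype V] (G : SimpleGraph V) [DecidableRel G.Adj]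
    (s : ℕ) (lam : ℂ) (x : V × Fin s → ℂ) : Prop :=
  ∀ (i : V) (a : Fin s),
    lam * x (i, a) ^ (2 * s - 1) =
      (∏ b ∈ Finset.univ.erase a, x (i, b)) *
        ∑ j ∈ G.neighborFinset i, ∏ b : Fin s, x (j, b)

theorem Matrix.mem_spectrum_iff_exists_mulVec_eq_smul {K n : Type*} [Field K] [Fintype n]
    [DecidableEq n] (A : Matrix n n K) (μ : K) :
    μ ∈ spectrum K A ↔ ∃ v ≠ 0, A *ᵥ v = μ • v := by
  rw [← spectrum_toLin', ← Module.End.hasEigenvalue_iff_mem_spectrum]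
  constructor
  · intro h
    obtain ⟨v, hv⟩ := h.exists_hasEigenvector
    exact ⟨v, hv.2, by simpa using hv.apply_eq_smul⟩
  · rintro ⟨v, hv, hAv⟩
    exact Module.End.hasEigenvalue_of_hasEigenvector
      ⟨Module.End.mem_eigenspace_iff.2 (by simpa using hAv), hv⟩

namespace Finset

variable {V R : Type*} [DecidableEq V] [Zero R]

def zeroExtend (S : Finset V) (f : S → R) (j : V) : R :=
  if h : j ∈ S then f ⟨j, h⟩ else 0

@[simp]
theorem zeroExtend_coe (S : Finset V) (f : S → R) (j : S) : S.zeroExtend f j = f j := by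
  simp [zeroExtend]

theorem zeroExtend_mul {M₀ : Type*} [MulZeroClass M₀] (S : Finset V) (f g : S → M₀) :
    S.zeroExtend (f * g) = S.zeroExtend f * S.zeroExtend g := by
  ext j
  by_cases hj : j ∈ S <;> simp [zeroExtend, hj]

theorem zeroExtend_of_notMem {S : Finset V} (f : S → R) {j : V} (hj : j ∉ S) :
    S.zeroExtend f j = 0 := by
  simp [zeroExtend, hj]

theorem mem_of_zeroExtend_ne_zero {S : Finset V} {f : S → R} {j : V}
    (hj : S.zeroExtend f j ≠ 0) : j ∈ S := by
  by_contra h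
  exact hj (zeroExtend_of_notMem f h)

end Finset

namespace SimpleGraph

variable {V : Type*} (G : SimpleGraph V) [DecidableRel G.Adj]

def adjMatrixOn (R : Type*) [Zero R] [One R] (S : Finset V) : Matrix S S R :=
  of fun i j => if G.Adj i j then 1 else 0

theorem adjMatrixOn_singleton (R : Type*) [Zero R] [One R] (i₀ : V) :
    G.adjMatrixOn R {i₀} = 0 := by
  ext ⟨i, hi⟩ ⟨j, hj⟩
  rw [mem_singleton] at hi hj
  subst hi hj
  simp [adjMatrixOn]

variable [DecidableEq V]

theorem adjMatrixOn_mulVec_apply [Fintype V] {R : Type*} [NonAssocSemiring R]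
    (S : Finset V) (y : S → R) (i : S) :
    (G.adjMatrixOn R S *ᵥ y) i = ∑ j ∈ G.neighborFinset i, S.zeroExtend y j := by
  calc (G.adjMatrixOn R S *ᵥ y) i
      = ∑ j ∈ S, if G.Adj i j then S.zeroExtend y j else 0 := by
        rw [← sum_coe_sort]
        simp [adjMatrixOn, mulVec, dotProduct]
    _ = ∑ j ∈ G.neighborFinset i, S.zeroExtend y j := by
        rw [← sum_filter]
        refine sum_subset (fun j hj => by simp_all) fun j _ hj => ?_
        have : j ∉ S := by simp_all
        exact zeroExtend_of_notMem y this

theorem mem_spectrum_adjMatrixOn_mul_diagonal_iff [Fintype V] {K : Type*} [Field K]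
    (S : Finset V) (a : S → K) (μ : K) :
    μ ∈ spectrum K (G.adjMatrixOn K S * diagonal a) ↔
      ∃ q : S → K, q ≠ 0 ∧ ∀ i : S,
        ∑ j ∈ G.neighborFinset i, S.zeroExtend a j * S.zeroExtend q j = μ * q i := by
  have diagonal_mulVec (v : S → K) : diagonal a *ᵥ v = a * v := funext (mulVec_diagonal a v)
  simp_rw [mem_spectrum_iff_exists_mulVec_eq_smul, ← mulVec_mulVec, funext_iff,
    adjMatrixOn_mulVec_apply, diagonal_mulVec, zeroExtend_mul, Pi.mul_apply,
    Pi.smul_apply, smul_eq_mul]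

theorem zero_mem_spectrum_adjMatrixOn_singleton_mul {K : Type*} [Field K] (i₀ : V)
    (a : ({i₀} : Finset V) → K) : 0 ∈ spectrum K (G.adjMatrixOn K {i₀} * diagonal a) := by
  simp [adjMatrixOn_singleton, spectrum.zero_eq]

end SimpleGraph

def blockProd {V M : Type*} [CommMonoid M] {s : ℕ} (x : V × Fin s → M) (i : V) : M :=
  ∏ b, x (i, b)

namespace IsBlowupEig

variable {V : Type*} [Fintype V] {G : SimpleGraph V} [DecidableRel G.Adj] {s : ℕ} {lam : ℂ}
  {x : V × Fin s → ℂ}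

theorem mul_pow_two_mul (h : IsBlowupEig G s lam x) (i : V) (a : Fin s) :
    lam * x (i, a) ^ (2 * s) = blockProd x i * ∑ j ∈ G.neighborFinset i, blockProd x j := by
  have : 2 * s = 2 * s - 1 + 1 := by have := a.pos; omega
  rw [this, pow_succ, ← mul_assoc, h i a, mul_right_comm, prod_erase_mul _ _ (mem_univ a)]
  rfl

theorem of_mul_pow_two_mul (hs : 2 ≤ s) (hblock : ∀ i a b, x (i, a) = 0 → x (i, b) = 0)
    (h : ∀ i a,
      lam * x (i, a) ^ (2 * s) = blockProd x i * ∑ j ∈ G.neighborFinset i, blockProd x j) :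
    IsBlowupEig G s lam x := by
  intro i a
  by_cases hx : x (i, a) = 0
  · have : Nontrivial (Fin s) := Fin.nontrivial_iff_two_le.2 hs
    obtain ⟨b, hb⟩ := exists_ne a
    rw [hx, zero_pow (by omega), mul_zero,
      prod_eq_zero (mem_erase.2 ⟨hb, mem_univ b⟩) (hblock i a b hx), zero_mul]
  · apply mul_right_cancel₀ hx
    rw [mul_assoc, ← pow_succ, Nat.sub_add_cancel (by omega), h, mul_right_comm,
      prod_erase_mul _ _ (mem_univ a)]
    rfl

theorem pow_two_mul_eq (h : IsBlowupEig G s lam x) (hlam : lam ≠ 0) (i : V) (a b : Fin s) :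
    x (i, a) ^ (2 * s) = x (i, b) ^ (2 * s) :=
  mul_left_cancel₀ hlam (by rw [h.mul_pow_two_mul, h.mul_pow_two_mul])

theorem exists_mem_spectrum [DecidableEq V] (h : IsBlowupEig G s lam x) (hlam : lam ≠ 0)
    (hx : x ≠ 0) :
    ∃ S : Finset V, ∃ a : S → ℂ, (∀ i, a i ^ s = 1) ∧
      lam ∈ spectrum ℂ (G.adjMatrixOn ℂ S * diagonal a) := by
  obtain ⟨⟨i₀, b₀⟩, hx₀⟩ := Function.ne_iff.1 hx
  let t : V → ℂ := fun i => x (i, b₀) ^ (2 * s)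
  have hP₀ : blockProd x i₀ ≠ 0 := fun hP => by
    have := h.mul_pow_two_mul i₀ b₀
    rw [hP, zero_mul] at this
    exact mul_ne_zero hlam (pow_ne_zero _ hx₀) this
  have ht : ∀ i, blockProd x i ≠ 0 → t i ≠ 0 := fun i hi =>
    pow_ne_zero _ (prod_ne_zero_iff.1 hi b₀ (mem_univ _))
  have hPt : ∀ i, (blockProd x i ^ 2) ^ s = t i ^ s := fun i => by
    calc (blockProd x i ^ 2) ^ s = ∏ b, x (i, b) ^ (2 * s) := by
          rw [← pow_mul, mul_comm 2, blockProd, prod_pow]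
      _ = t i ^ s := by
          rw [prod_congr rfl fun b _ => h.pow_two_mul_eq hlam i b b₀, prod_const, card_univ,
            Fintype.card_fin]
  let S := univ.filter fun i => blockProd x i ≠ 0
  have hS : ∀ i : S, blockProd x i ≠ 0 := fun i => (mem_filter.1 i.2).2
  let a : S → ℂ := fun i => blockProd x i ^ 2 / t i
  let q : S → ℂ := fun i => t i / blockProd x i
  have haq : ∀ j, S.zeroExtend a j * S.zeroExtend q j = blockProd x j := fun j => by
    by_cases hj : j ∈ S
    · lift j to S using hj
      simp only [zeroExtend_coe, a, q]
      field_simp [hS j, ht _ (hS j)]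
    · rw [zeroExtend_of_notMem _ hj, zero_mul]
      simp only [S, mem_filter, mem_univ, true_and, not_not] at hj
      exact hj.symm
  refine ⟨S, a, fun i => ?_, (G.mem_spectrum_adjMatrixOn_mul_diagonal_iff S a lam).2
    ⟨q, Function.ne_iff.2 ⟨⟨i₀, by simp [S, hP₀]⟩, div_ne_zero (ht _ hP₀) hP₀⟩, fun i => ?_⟩⟩
  · rw [div_pow, hPt, div_self (pow_ne_zero _ (ht _ (hS i)))]
  · rw [sum_congr rfl fun j _ => haq j, mul_div_assoc', eq_div_iff (hS i), mul_comm,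
      ← h.mul_pow_two_mul]

end IsBlowupEig

theorem exists_isBlowupEig_of_sum_neighborFinset {V : Type*} [Fintype V] {G : SimpleGraph V}
    [DecidableRel G.Adj] {s : ℕ} (hs : 2 ≤ s) {lam : ℂ} (α w : V → ℂ) (hw : w ≠ 0)
    (hα : ∀ i, w i ≠ 0 → α i ^ s = 1)
    (hsum : ∀ i, w i ≠ 0 → ∑ j ∈ G.neighborFinset i, α j * w j = lam * w i) :
    ∃ x : V × Fin s → ℂ, x ≠ 0 ∧ IsBlowupEig G s lam x := by
  let b₀ : Fin s := ⟨0, by omega⟩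
  choose u hu using fun i => IsAlgClosed.exists_pow_nat_eq (α i) two_pos
  choose c hc using fun i => IsAlgClosed.exists_pow_nat_eq (u i * w i) (by omega : 0 < s)
  let x : V × Fin s → ℂ := fun p => (if p.2 = b₀ then u p.1 else 1) * c p.1
  have hprod : ∀ i, blockProd x i = α i * w i := fun i => by
    simp only [blockProd, x, prod_mul_distrib, prod_ite_eq', mem_univ, if_true, prod_const,
      card_univ, Fintype.card_fin, hc, ← hu]
    ring
  have hzero : ∀ i, w i = 0 → ∀ b, x (i, b) = 0 := fun i hi b => by
    have : c i = 0 := pow_eq_zero_iff (by omega : s ≠ 0) |>.1 (by rw [hc, hi, mul_zero])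
    simp [x, this]
  have hpow : ∀ i, w i ≠ 0 → ∀ b, x (i, b) ^ (2 * s) = α i * w i ^ 2 := fun i hi b => by
    have hu2s : u i ^ (2 * s) = 1 := by rw [pow_mul, hu, hα i hi]
    have hc2s : c i ^ (2 * s) = α i * w i ^ 2 := by rw [mul_comm 2, pow_mul, hc, mul_pow, hu]
    by_cases hb : b = b₀ <;> simp [x, hb, mul_pow, hu2s, hc2s]
  have hα₀ : ∀ i, w i ≠ 0 → α i ≠ 0 := fun i hi h0 => by
    simpa [h0, zero_pow (by omega : s ≠ 0)] using hα i hi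
  have hne : ∀ i, w i ≠ 0 → ∀ b, x (i, b) ≠ 0 := fun i hi b hx => by
    have := hpow i hi b
    rw [hx, zero_pow (by omega)] at this
    exact mul_ne_zero (hα₀ i hi) (pow_ne_zero 2 hi) this.symm
  obtain ⟨i₀, hi₀⟩ := Function.ne_iff.1 hw
  refine ⟨x, fun hx => hne i₀ hi₀ b₀ (congrFun hx _), .of_mul_pow_two_mul hs ?_ fun i a => ?_⟩
  · intro i a b hxa
    by_cases hi : w i = 0
    · exact hzero i hi b
    · exact absurd hxa (hne i hi a)
  by_cases hi : w i = 0
  · rw [hzero i hi a, hprod, hi]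
    simp [zero_pow (by omega : 2 * s ≠ 0)]
  · rw [hpow i hi a, hprod, sum_congr rfl fun j _ => hprod j, hsum i hi]
    ring

/-- The spectrum of `G^[s]` depends only on the squares of the vertex weights:
it consists of the eigenvalues of `A(Ĝ) * D_a` with `a_i` s-th roots of unity. -/
theorem stmt_18 {V : Type*} [Fintype V] [DecidableEq V]
    (G : SimpleGraph V) [DecidableRel G.Adj] (s : ℕ) (hs : 2 ≤ s) (lam : ℂ) :
    (∃ x : V × Fin s → ℂ, x ≠ 0 ∧ IsBlowupEig G s lam x) ↔
      ∃ S : Finset V, ∃ a : {i // i ∈ S} → ℂ, (∀ i, a i ^ s = 1) ∧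
        lam ∈ spectrum ℂ
          ((Matrix.of fun i j : {i // i ∈ S} => if G.Adj i j then (1 : ℂ) else 0) *
            Matrix.diagonal a) := by
  constructor
  · rintro ⟨x, hx, h⟩
    rcases eq_or_ne lam 0 with rfl | hlam
    · obtain ⟨⟨i₀, -⟩, -⟩ := Function.ne_iff.1 hx
      exact ⟨{i₀}, 1, fun _ => one_pow s, G.zero_mem_spectrum_adjMatrixOn_singleton_mul i₀ 1⟩
    · exact h.exists_mem_spectrum hlam hx
  · rintro ⟨S, a, ha, hlam⟩
    obtain ⟨q, hq, hsum⟩ := (G.mem_spectrum_adjMatrixOn_mul_diagonal_iff S a lam).1 hlam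
    obtain ⟨i₀, hi₀⟩ := Function.ne_iff.1 hq
    refine exists_isBlowupEig_of_sum_neighborFinset hs (S.zeroExtend a) (S.zeroExtend q)
      (Function.ne_iff.2 ⟨i₀, by simpa using hi₀⟩) (fun i hi => ?_) (fun i hi => ?_)
    · lift i to S using mem_of_zeroExtend_ne_zero hi
      simpa using ha i
    · lift i to S using mem_of_zeroExtend_ne_zero hi
      simpa using hsum i
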